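/- arXiv:1711.02576 — 2 statements merged into one kernel-verified Lean document; each statement's English description precedes it below -/
import Mathlib

section
/- Suppose n ≥ 3, 1 ≤ c ≤ n−2, |a_0| = 1, and A is a matrix of type E_c(p♯)^{−1}. Then N(F) ≤ N(A), where F is the Frobenius companion matrix of p. -/
noncomputable section

/-- Maximum absolute row sum (the `∞`-norm). -/
def infNorm {n : ℕ} (A : Matrix (Fin n) (Fin n) ℂ) : ℝ :=
  ⨆ i, ∑ j, ‖A i j‖

/-- Maximum absolute column sum (the `1`-norm). -/
def oneNorm {n : ℕ} (A : Matrix (Fin n) (Fin n) ℂ) : ℝ :=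
  ⨆ j, ∑ i, ‖A i j‖

/-- `N(A) = min {‖A‖_∞, ‖A‖_1}`. -/
def NN {n : ℕ} (A : Matrix (Fin n) (Fin n) ℂ) : ℝ :=
  min (infNorm A) (oneNorm A)

/-- The monic polynomial `p(x) = x^n + a_{n-1}x^{n-1} + ⋯ + a_1 x + a_0`. -/
def pPoly (n : ℕ) (a : ℕ → ℂ) : Polynomial ℂ :=
  Polynomial.X ^ n + ∑ k ∈ Finset.range n, Polynomial.C (a k) * Polynomial.X ^ k

/-- Coefficients of the monic reversal polynomial `p♯`:
`asharp n a k` is the coefficient of `x^k` in `p♯`, namely `1/a_0` for `k = 0`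
and `a_{n-k}/a_0` for `1 ≤ k ≤ n-1`. -/
def asharp (n : ℕ) (a : ℕ → ℂ) : ℕ → ℂ :=
  fun k => if k = 0 then 1 / a 0 else a (n - k) / a 0

/-- A unit sparse companion matrix of `p` in Hessenberg form, with explicit data:
`m` (0-based; `m + 1 ≤ n`), and 0-based positions `(r k, c k)` (for `k = 0, …, n-1`)
satisfying `r k - c k = k`, `m ≤ r k ≤ n-1`, `0 ≤ c k ≤ m`; the superdiagonal
entries are `1`, the entry at `(r k, c k)` is `-a_{n-1-k}`, and all other entries
are `0`.  (This is the 0-based translation of the 1-based description.) -/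
def IsUnitSparseData (n m : ℕ) (a : ℕ → ℂ) (C : Matrix (Fin n) (Fin n) ℂ)
    (r c : Fin n → Fin n) : Prop :=
  m + 1 ≤ n ∧
  (∀ k : Fin n, (r k : ℕ) = (c k : ℕ) + (k : ℕ)) ∧
  (∀ k : Fin n, m ≤ (r k : ℕ)) ∧
  (∀ k : Fin n, (c k : ℕ) ≤ m) ∧
  (∀ k : Fin n, C (r k) (c k) = -a (n - 1 - (k : ℕ))) ∧
  (∀ i j : Fin n, (j : ℕ) = (i : ℕ) + 1 → C i j = 1) ∧
  (∀ i j : Fin n, (j : ℕ) ≠ (i : ℕ) + 1 →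
    (∀ k : Fin n, ¬(r k = i ∧ c k = j)) → C i j = 0)

/-- A unit sparse companion matrix of `p` in Hessenberg form. -/
def IsUnitSparse (n : ℕ) (a : ℕ → ℂ) (C : Matrix (Fin n) (Fin n) ℂ) : Prop :=
  ∃ (m : ℕ) (r c : Fin n → Fin n), IsUnitSparseData n m a C r c

/-- A Fiedler companion matrix of `p` in Hessenberg form (with explicit position
data): a unit sparse companion matrix such that for `1 ≤ k ≤ n-1`, if `-a_{k-1}`
occupies position `(i,j)` then `-a_k` occupies position `(i-1,j)` or `(i,j+1)`.
Here the coefficient `-a_{n-1-k}` sits at position index `k`, so the coefficient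
`-a_{k-1}` has index `k' = n-k` and `-a_k` has index `n-1-k = k' - 1`. -/
def IsFiedlerData (n m : ℕ) (a : ℕ → ℂ) (C : Matrix (Fin n) (Fin n) ℂ)
    (r c : Fin n → Fin n) : Prop :=
  IsUnitSparseData n m a C r c ∧
  ∀ k k' : Fin n, (k' : ℕ) = (k : ℕ) + 1 →
    ((r k : ℕ) + 1 = (r k' : ℕ) ∧ c k = c k') ∨
    (r k = r k' ∧ (c k : ℕ) = (c k' : ℕ) + 1)

/-- The Frobenius companion matrix of the monic polynomial with coefficients `a`
(0-based: superdiagonal `1`'s and last row `-a_0, -a_1, …, -a_{n-1}`). -/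
def Frob (n : ℕ) (a : ℕ → ℂ) : Matrix (Fin n) (Fin n) ℂ :=
  Matrix.of fun i j =>
    if (j : ℕ) = (i : ℕ) + 1 then 1
    else if (i : ℕ) = n - 1 then -a (j : ℕ)
    else 0

/-- The Fiedler companion matrix `L_b` (0-based translation): superdiagonal `1`'s,
`(L_b)_{i,b} = -a_{n+b-1-i}` for `b ≤ i ≤ n-2`, and `(L_b)_{n-1,j} = -a_j` for
`0 ≤ j ≤ b`; all other entries `0`. -/
def Lmat (n b : ℕ) (a : ℕ → ℂ) : Matrix (Fin n) (Fin n) ℂ :=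
  Matrix.of fun i j =>
    if (j : ℕ) = (i : ℕ) + 1 then 1
    else if (i : ℕ) = n - 1 ∧ (j : ℕ) ≤ b then -a (j : ℕ)
    else if (j : ℕ) = b ∧ b ≤ (i : ℕ) ∧ (i : ℕ) + 2 ≤ n then -a (n + b - 1 - (i : ℕ))
    else 0

/-- The matrix `W` (0-based translation): `W_{0,0} = -a_{n-1}`, `W_{0,n-1} = -a_0`,
`W_{i,i-1} = 1` for `1 ≤ i ≤ n-1`, `W_{i,0} = a_{i-1}/a_0` for `2 ≤ i ≤ n-1`;
all other entries `0`. -/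
def Wmat (n : ℕ) (a : ℕ → ℂ) : Matrix (Fin n) (Fin n) ℂ :=
  Matrix.of fun i j =>
    if (i : ℕ) = 0 ∧ (j : ℕ) = 0 then -a (n - 1)
    else if (i : ℕ) = 0 ∧ (j : ℕ) = n - 1 then -a 0
    else if (i : ℕ) = (j : ℕ) + 1 then 1
    else if 2 ≤ (i : ℕ) ∧ (j : ℕ) = 0 then a ((i : ℕ) - 1) / a 0
    else 0

/-- The matrix `X_b` (0-based translation): `(X_b)_{0,j} = -a_{n-1-j}` for
`0 ≤ j ≤ n-2-b`, `(X_b)_{0,n-1} = -a_0`, `(X_b)_{i,i-1} = 1` for `1 ≤ i ≤ n-2`,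
`(X_b)_{n-1,n-2} = 1`, `(X_b)_{n-1,j} = a_{n-2-j}/a_0` for `n-2-b ≤ j ≤ n-3`;
all other entries `0`. -/
def Xmat (n b : ℕ) (a : ℕ → ℂ) : Matrix (Fin n) (Fin n) ℂ :=
  Matrix.of fun i j =>
    if (i : ℕ) = 0 ∧ (j : ℕ) + b ≤ n - 2 then -a (n - 1 - (j : ℕ))
    else if (i : ℕ) = 0 ∧ (j : ℕ) = n - 1 then -a 0
    else if (i : ℕ) = (j : ℕ) + 1 ∧ (i : ℕ) + 2 ≤ n then 1
    else if (i : ℕ) = n - 1 ∧ (j : ℕ) = n - 2 then 1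
    else if (i : ℕ) = n - 1 ∧ n - 2 ≤ (j : ℕ) + b ∧ (j : ℕ) + 3 ≤ n then
      a (n - 2 - (j : ℕ)) / a 0
    else 0

/-- A matrix `E` of type `E_c(q)` for the monic polynomial with coefficients `b`
(0-based translation of the 1-based description): superdiagonal `1`'s,
`E_{n-1,0} = -b_0`, and positions `(r k, col k)` for `k = 0, …, n-2` with
`r k = col k + k`, `c ≤ r k`, `1 ≤ col k ≤ c`, holding `-b_{n-1-k}`; all other
entries `0`. -/
def IsTypeE (n c : ℕ) (b : ℕ → ℂ) (E : Matrix (Fin n) (Fin n) ℂ) : Prop :=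
  ∃ r col : ℕ → Fin n,
    (∀ k : ℕ, k ≤ n - 2 → (r k : ℕ) = (col k : ℕ) + k) ∧
    (∀ k : ℕ, k ≤ n - 2 → c ≤ (r k : ℕ)) ∧
    (∀ k : ℕ, k ≤ n - 2 → 1 ≤ (col k : ℕ) ∧ (col k : ℕ) ≤ c) ∧
    (∀ k : ℕ, k ≤ n - 2 → E (r k) (col k) = -b (n - 1 - k)) ∧
    (∀ i j : Fin n, (j : ℕ) = (i : ℕ) + 1 → E i j = 1) ∧
    (∀ i j : Fin n, (i : ℕ) = n - 1 → (j : ℕ) = 0 → E i j = -b 0) ∧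
    (∀ i j : Fin n, (j : ℕ) ≠ (i : ℕ) + 1 → ¬((i : ℕ) = n - 1 ∧ (j : ℕ) = 0) →
      (∀ k : ℕ, k ≤ n - 2 → ¬(r k = i ∧ col k = j)) → E i j = 0)

/-- `A` is of type `E_c(p♯)⁻¹`: `A = E⁻¹` for some `E` of type `E_c(p♯)`. -/
def IsTypeEInv (n c : ℕ) (a : ℕ → ℂ) (A : Matrix (Fin n) (Fin n) ℂ) : Prop :=
  ∃ E : Matrix (Fin n) (Fin n) ℂ, IsTypeE n c (asharp n a) E ∧ A = E⁻¹

/-!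
Write `σ = finRotate n` for the cyclic successor on indices and let `A = E⁻¹`. For `i < c`, row `i`
of `E` is the unit vector `e_{σ i}`; for `i ≥ c`, column `σ i` of `E` is `e_i` times `1`, or times
`-1/a₀` when `i = n - 1`. This makes `E` invertible, and for each coefficient entry
`E R (σ Q) = -a_m / a₀` (where `Q < c ≤ R`) it pins down three entries of `A`: `A (σ R) R` and
`A (σ Q) Q` have modulus `1`, and comparing entry `(σ R, σ Q)` of `A E = 1` gives
`A (σ R) Q = -A (σ R) R · E R (σ Q)`, of modulus `|a_m|`. Hence row `σ R` and column `Q` of `A` both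
have absolute sum at least `1 + |a_m|`, whereas every column of `F` has absolute sum `|a₀| = 1` or
`1 + |a_j|` with `1 ≤ j ≤ n - 1`.
-/

open Finset

lemma val_finRotate {n : ℕ} (i : Fin n) :
    (finRotate n i : ℕ) = if (i : ℕ) = n - 1 then 0 else (i : ℕ) + 1 := by
  cases n with
  | zero => exact i.elim0
  | succ n => rw [coe_finRotate]; simp [Fin.ext_iff]

section Norms

variable {n : ℕ} (A : Matrix (Fin n) (Fin n) ℂ)

lemma sum_norm_le_infNorm (i : Fin n) : ∑ j, ‖A i j‖ ≤ infNorm A :=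
  le_ciSup (f := fun i => ∑ j, ‖A i j‖) (Set.finite_range _).bddAbove i

lemma sum_norm_le_oneNorm (j : Fin n) : ∑ i, ‖A i j‖ ≤ oneNorm A :=
  le_ciSup (f := fun j => ∑ i, ‖A i j‖) (Set.finite_range _).bddAbove j

variable {A} in
lemma oneNorm_le {M : ℝ} (hM : 0 ≤ M) (h : ∀ j, ∑ i, ‖A i j‖ ≤ M) : oneNorm A ≤ M :=
  Real.iSup_le h hM

lemma sum_norm_Frob_col (a : ℕ → ℂ) (j : Fin n) :
    ∑ i, ‖Frob n a i j‖ = (if (j : ℕ) = 0 then 0 else 1) + ‖a j‖ := by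
  have hj := j.isLt
  have hlast : Frob n a ⟨n - 1, by omega⟩ j = -a j := by
    simp only [Frob, Matrix.of_apply]; rw [if_neg (by omega), if_pos trivial]
  have hzero : ∀ i : Fin n, (i : ℕ) ≠ n - 1 → (j : ℕ) ≠ i + 1 → Frob n a i j = 0 := by
    intro i hi hji
    simp only [Frob, Matrix.of_apply]; rw [if_neg hji, if_neg hi]
  split_ifs with hj0
  · rw [zero_add, Fintype.sum_eq_single ⟨n - 1, by omega⟩, hlast, norm_neg]
    intro i hi
    rw [hzero i (fun h => hi (Fin.ext h)) (by omega), norm_zero]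
  · rw [Fintype.sum_eq_add ⟨j - 1, by omega⟩ ⟨n - 1, by omega⟩ (by simp [Fin.ext_iff]; omega),
      hlast, norm_neg]
    · simp only [Frob, Matrix.of_apply]; rw [if_pos (by omega), norm_one]
    · rintro i ⟨hi1, hi2⟩
      rw [Ne, Fin.ext_iff] at hi1 hi2
      rw [hzero i hi2 (by simp only at hi1; omega), norm_zero]

end Norms

namespace IsTypeE

variable {n c : ℕ} {b : ℕ → ℂ} {E : Matrix (Fin n) (Fin n) ℂ}

lemma two_le (hE : IsTypeE n c b E) : 2 ≤ n := by
  obtain ⟨r, col, -, -, hcol, -⟩ := hE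
  have := (hcol 0 (Nat.zero_le _)).1
  have := (col 0).isLt
  omega

lemma le_last (hE : IsTypeE n c b E) : c ≤ n - 1 := by
  obtain ⟨r, -, -, hr, -⟩ := hE
  have := hr 0 (Nat.zero_le _)
  have := (r 0).isLt
  omega

lemma exists_coeff (hE : IsTypeE n c b E) {k : ℕ} (hk : k ≤ n - 2) :
    ∃ R Q : Fin n, c ≤ (R : ℕ) ∧ (Q : ℕ) < c ∧ E R (finRotate n Q) = -b (n - 1 - k) := by
  have hlast := hE.le_last
  obtain ⟨r, col, -, hr, hcol, hcoeff, -⟩ := hE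
  have hC := hcol k hk
  have hQ : finRotate n ⟨col k - 1, by omega⟩ = col k :=
    Fin.ext (by rw [val_finRotate, if_neg (by simp only; omega)]; simp only; omega)
  exact ⟨r k, ⟨col k - 1, by omega⟩, hr k hk, by simp only; omega, hQ ▸ hcoeff k hk⟩

lemma apply_eq_zero (hE : IsTypeE n c b E) {i j : Fin n} (hsup : (j : ℕ) ≠ i + 1)
    (hcorner : ¬((i : ℕ) = n - 1 ∧ (j : ℕ) = 0)) (hout : (i : ℕ) < c ∨ (j : ℕ) = 0 ∨ c < j) :
    E i j = 0 := by
  obtain ⟨r, col, -, hr, hcol, -, -, -, hzero⟩ := hE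
  refine hzero i j hsup hcorner fun k hk ⟨hri, hcj⟩ => ?_
  have := hr k hk
  have := hcol k hk
  subst hri hcj
  omega

lemma apply_superdiag (hE : IsTypeE n c b E) {i j : Fin n} (h : (j : ℕ) = i + 1) : E i j = 1 := by
  obtain ⟨-, -, -, -, -, -, hsup, -⟩ := hE
  exact hsup i j h

lemma apply_corner (hE : IsTypeE n c b E) {i j : Fin n} (hi : (i : ℕ) = n - 1) (hj : (j : ℕ) = 0) :
    E i j = -b 0 := by
  obtain ⟨-, -, -, -, -, -, -, hcorner, -⟩ := hE
  exact hcorner i j hi hj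

lemma apply_row_of_lt (hE : IsTypeE n c b E) {i : Fin n} (hi : (i : ℕ) < c) (l : Fin n) :
    E i l = if l = finRotate n i then 1 else 0 := by
  have hlast := hE.le_last
  have hrot : (finRotate n i : ℕ) = i + 1 := by rw [val_finRotate, if_neg (by omega)]
  split_ifs with hl
  · exact hE.apply_superdiag (by rw [hl, hrot])
  · exact hE.apply_eq_zero (fun h => hl (Fin.ext (by omega))) (by omega) (Or.inl hi)

lemma apply_col_finRotate (hE : IsTypeE n c b E) {i : Fin n} (hi : c ≤ (i : ℕ)) (l : Fin n) :
    E l (finRotate n i) = if l = i then (if (i : ℕ) = n - 1 then -b 0 else 1) else 0 := by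
  have hrot := val_finRotate i
  split_ifs at hrot ⊢ with hl hlast hlast
  · exact hE.apply_corner (by rw [hl, hlast]) hrot
  · exact hE.apply_superdiag (by rw [hl, hrot])
  · exact hE.apply_eq_zero (by omega) (fun h => hl (Fin.ext (by omega))) (Or.inr (Or.inl hrot))
  · exact hE.apply_eq_zero (fun h => hl (Fin.ext (by omega))) (by omega)
      (Or.inr (Or.inr (by omega)))

lemma isUnit (hE : IsTypeE n c b E) (hb : b 0 ≠ 0) : IsUnit E := by
  rw [← Matrix.vecMul_injective_iff_isUnit]
  intro v w hvw
  have h : Matrix.vecMul (v - w) E = 0 := by rw [Matrix.sub_vecMul, sub_eq_zero]; exact hvw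
  have hge : ∀ i : Fin n, c ≤ (i : ℕ) → (v - w) i = 0 := by
    intro i hi
    have hi' := congrFun h (finRotate n i)
    rw [Matrix.vecMul, dotProduct, Fintype.sum_eq_single i (fun l hl => by
      rw [hE.apply_col_finRotate hi, if_neg hl, mul_zero]), hE.apply_col_finRotate hi,
      if_pos rfl] at hi'
    split_ifs at hi' <;> simpa [hb] using hi'
  have hlt : ∀ i : Fin n, (i : ℕ) < c → (v - w) i = 0 := by
    intro i hi
    have hi' := congrFun h (finRotate n i)
    rw [Matrix.vecMul, dotProduct, Fintype.sum_eq_single i (fun l hl => ?_),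
      hE.apply_row_of_lt hi, if_pos rfl, mul_one] at hi'
    · exact hi'
    rcases lt_or_ge (l : ℕ) c with hl' | hl'
    · rw [hE.apply_row_of_lt hl', if_neg ((finRotate n).injective.ne hl).symm, mul_zero]
    · rw [hge l hl', zero_mul]
  exact sub_eq_zero.mp (funext fun i => (lt_or_ge (i : ℕ) c).elim (hlt i) (hge i))

lemma isUnit_det (hE : IsTypeE n c b E) (hb : b 0 ≠ 0) : IsUnit E.det :=
  (E.isUnit_iff_isUnit_det).mp (hE.isUnit hb)

lemma inv_apply_mul (hE : IsTypeE n c b E) (hb : b 0 ≠ 0) {l : Fin n} (hl : c ≤ (l : ℕ))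
    (k : Fin n) :
    E⁻¹ k l * (if (l : ℕ) = n - 1 then -b 0 else 1) = if k = finRotate n l then 1 else 0 := by
  have h := congrFun₂ (Matrix.nonsing_inv_mul E (hE.isUnit_det hb))
    k (finRotate n l)
  rwa [Matrix.mul_apply, Fintype.sum_eq_single l (fun m hm => by
    rw [hE.apply_col_finRotate hl, if_neg hm, mul_zero]), hE.apply_col_finRotate hl,
    if_pos rfl, Matrix.one_apply] at h

lemma inv_apply_eq_zero (hE : IsTypeE n c b E) (hb : b 0 ≠ 0) {l k : Fin n}
    (hl : c ≤ (l : ℕ)) (hk : k ≠ finRotate n l) : E⁻¹ k l = 0 := by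
  have h := hE.inv_apply_mul hb hl k
  rw [if_neg hk] at h
  refine (mul_eq_zero.mp h).resolve_right ?_
  split_ifs
  exacts [neg_ne_zero.mpr hb, one_ne_zero]

lemma norm_inv_apply_finRotate (hE : IsTypeE n c b E) (hb : ‖b 0‖ = 1) {R : Fin n}
    (hR : c ≤ (R : ℕ)) : ‖E⁻¹ (finRotate n R) R‖ = 1 := by
  have h := congrArg norm (hE.inv_apply_mul (norm_ne_zero_iff.mp (by simp [hb])) hR (finRotate n R))
  rw [if_pos rfl, norm_mul, norm_one] at h
  split_ifs at h <;> simpa [hb] using h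

lemma inv_apply_finRotate_of_lt (hE : IsTypeE n c b E) (hb : b 0 ≠ 0) {Q : Fin n}
    (hQ : (Q : ℕ) < c) : E⁻¹ (finRotate n Q) Q = 1 := by
  have h := congrFun₂ (Matrix.mul_nonsing_inv E (hE.isUnit_det hb)) Q Q
  rwa [Matrix.mul_apply, Fintype.sum_eq_single (finRotate n Q) (fun l hl => by
    rw [hE.apply_row_of_lt hQ, if_neg hl, zero_mul]), hE.apply_row_of_lt hQ, if_pos rfl,
    one_mul, Matrix.one_apply_eq] at h

lemma inv_apply_finRotate_eq_neg (hE : IsTypeE n c b E) (hb : b 0 ≠ 0) {R Q : Fin n}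
    (hR : c ≤ (R : ℕ)) (hQ : (Q : ℕ) < c) :
    E⁻¹ (finRotate n R) Q = -(E⁻¹ (finRotate n R) R * E R (finRotate n Q)) := by
  have hQR : Q ≠ R := fun h => by rw [h] at hQ; omega
  have h := congrFun₂ (Matrix.nonsing_inv_mul E (hE.isUnit_det hb))
    (finRotate n R) (finRotate n Q)
  rw [Matrix.mul_apply, Fintype.sum_eq_add Q R hQR ?_,
    Matrix.one_apply_ne ((finRotate n).injective.ne hQR.symm), hE.apply_row_of_lt hQ,
    if_pos rfl, mul_one] at h
  · exact eq_neg_of_add_eq_zero_left h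
  rintro l ⟨hlQ, hlR⟩
  rcases lt_or_ge (l : ℕ) c with hl | hl
  · rw [hE.apply_row_of_lt hl, if_neg ((finRotate n).injective.ne hlQ).symm, mul_zero]
  · rw [hE.inv_apply_eq_zero hb hl ((finRotate n).injective.ne (Ne.symm hlR)), zero_mul]

lemma one_add_norm_le_NN_inv (hE : IsTypeE n c b E) (hb : ‖b 0‖ = 1) {R Q : Fin n}
    (hR : c ≤ (R : ℕ)) (hQ : (Q : ℕ) < c) : 1 + ‖E R (finRotate n Q)‖ ≤ NN E⁻¹ := by
  have hb0 : b 0 ≠ 0 := norm_ne_zero_iff.mp (by simp [hb])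
  have hQR : Q ≠ R := fun h => by rw [h] at hQ; omega
  set P := finRotate n R
  have hPR := hE.norm_inv_apply_finRotate hb hR
  have hPQ : ‖E⁻¹ P Q‖ = ‖E R (finRotate n Q)‖ := by
    rw [hE.inv_apply_finRotate_eq_neg hb0 hR hQ, norm_neg, norm_mul, hPR, one_mul]
  refine le_min ?_ ?_
  · calc 1 + ‖E R (finRotate n Q)‖ = ‖E⁻¹ P R‖ + ‖E⁻¹ P Q‖ := by rw [hPR, hPQ]
      _ ≤ ∑ j, ‖E⁻¹ P j‖ :=
        add_le_sum (f := fun j => ‖E⁻¹ P j‖) (fun _ _ => norm_nonneg _) (mem_univ _) (mem_univ _)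
          hQR.symm
      _ ≤ infNorm E⁻¹ := sum_norm_le_infNorm _ P
  · calc 1 + ‖E R (finRotate n Q)‖ = ‖E⁻¹ (finRotate n Q) Q‖ + ‖E⁻¹ P Q‖ := by
          rw [hE.inv_apply_finRotate_of_lt hb0 hQ, norm_one, hPQ]
      _ ≤ ∑ i, ‖E⁻¹ i Q‖ :=
        add_le_sum (f := fun i => ‖E⁻¹ i Q‖) (fun _ _ => norm_nonneg _) (mem_univ _) (mem_univ _)
          ((finRotate n).injective.ne hQR)
      _ ≤ oneNorm E⁻¹ := sum_norm_le_oneNorm _ Q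

end IsTypeE

theorem stmt11_general (n c : ℕ) (a : ℕ → ℂ) (ha0 : ‖a 0‖ = 1)
    (A : Matrix (Fin n) (Fin n) ℂ) (hA : IsTypeEInv n c a A) :
    NN (Frob n a) ≤ NN A := by
  obtain ⟨E, hE, rfl⟩ := hA
  have hn := hE.two_le
  have hsharp : ‖asharp n a 0‖ = 1 := by simp [asharp, ha0]
  have key : ∀ m, 1 ≤ m → m ≤ n - 1 → 1 + ‖a m‖ ≤ NN E⁻¹ := by
    intro m hm1 hm
    obtain ⟨R, Q, hR, hQ, hRQ⟩ := hE.exists_coeff (k := m - 1) (by omega)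
    have hcoeff : ‖E R (finRotate n Q)‖ = ‖a m‖ := by
      rw [hRQ, norm_neg, asharp, if_neg (by omega), show n - (n - 1 - (m - 1)) = m by omega,
        norm_div, ha0, div_one]
    exact hcoeff ▸ hE.one_add_norm_le_NN_inv hsharp hR hQ
  have hone : 1 ≤ NN E⁻¹ := by linarith [key 1 le_rfl (by omega), norm_nonneg (a 1)]
  refine (min_le_right _ _).trans (oneNorm_le (zero_le_one.trans hone) fun j => ?_)
  rw [sum_norm_Frob_col]
  split_ifs with hj
  · rwa [zero_add, hj, ha0]
  · exact key j (by omega) (by omega)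

/-- if `n ≥ 3`, `1 ≤ c ≤ n-2`, `|a_0| = 1` and `A` is of type
`E_c(p♯)⁻¹`, then `N(F) ≤ N(A)`. -/
theorem stmt11 (n c : ℕ) (hn : 3 ≤ n) (hc1 : 1 ≤ c) (hc2 : c ≤ n - 2)
    (a : ℕ → ℂ) (ha : a 0 ≠ 0) (ha0 : ‖a 0‖ = 1)
    (A : Matrix (Fin n) (Fin n) ℂ) (hA : IsTypeEInv n c a A) :
    NN (Frob n a) ≤ NN A :=
  stmt11_general n c a ha0 A hA

end
end

section
/- Suppose n ≥ 3, 1 ≤ c ≤ n−2, 0 < |a_0| < 1, and A is a matrix of type E_c(p♯)^{−1}. Then (i) N(F) − ‖A‖_∞ ≤ 1, (ii) N(F) ≤ 2‖A‖_∞, and (iii) N(F) ≤ ‖A‖_1, where F is the Frobenius companion matrix of p. -/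
noncomputable section

/-!
Write `E = P + S`, where `P` is the cyclic shift with corner entry `-b₀` and `S` holds the
remaining coefficients, in rows `≥ c` and columns `1, …, c`. The inverse `Q` of `P` is again a
(transposed) cyclic shift; right multiplication by `Q` moves the columns `1, …, c` of `S` to
`0, …, c-1`, which index no nonzero row of `S`. Hence `S Q S = 0` and `E⁻¹ = Q - Q S Q`.
In this formula an entry `E_{R,C}` of `S` produces, in column `C - 1` of `E⁻¹`, a `1` in row `C`
and `-E_{R,C}` (divided by `-b₀` when `R = n-1`) in row `R + 1 mod n`. For `b = p♯` and
`|a₀| < 1` that entry has modulus at least `|a_j|`, so `‖A‖_∞ ≥ max 1 |a_j|` and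
`‖A‖₁ ≥ 1 + |a_j|`, while `‖F‖₁ ≤ max |a₀| (1 + |a_j|)`.
-/
open Matrix Finset

theorem add_mul_sub_eq_one {R : Type*} [Ring R] {P Q S : R} (hPQ : P * Q = 1)
    (hSQS : S * Q * S = 0) : (P + S) * (Q - Q * S * Q) = 1 := by
  have hPQS : P * (Q * S * Q) = S * Q := by rw [← mul_assoc, ← mul_assoc, hPQ, one_mul]
  rw [add_mul, mul_sub, mul_sub, hPQ, hPQS, ← mul_assoc S, ← mul_assoc S, hSQS, zero_mul]
  abel

theorem finRotate_eq_iff {n : ℕ} (i j : Fin n) :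
    finRotate n i = j ↔ (j : ℕ) = i + 1 ∨ ((i : ℕ) + 1 = n ∧ (j : ℕ) = 0) := by
  cases n with
  | zero => exact i.elim0
  | succ n =>
    simp only [Fin.ext_iff, coe_finRotate, Fin.val_last]
    split_ifs <;> omega

section Monomial

variable {m K : Type*} [Fintype m] [DecidableEq m] [Semiring K]

def monomialMatrix (σ : Equiv.Perm m) (d : m → K) : Matrix m m K :=
  of fun i j => if σ i = j then d i else 0

theorem mul_transpose_monomialMatrix_apply (M : Matrix m m K) (σ : Equiv.Perm m) (d : m → K)
    (i j : m) : (M * (monomialMatrix σ d)ᵀ) i j = M i (σ j) * d j := by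
  simp [monomialMatrix, mul_apply]

theorem transpose_monomialMatrix_mul_apply (M : Matrix m m K) (σ : Equiv.Perm m) (d : m → K)
    (i j : m) : ((monomialMatrix σ d)ᵀ * M) i j = d (σ.symm i) * M (σ.symm i) j := by
  simp [monomialMatrix, mul_apply, ← Equiv.eq_symm_apply]

theorem monomialMatrix_mul_transpose {σ : Equiv.Perm m} {d e : m → K} (h : ∀ i, d i * e i = 1) :
    monomialMatrix σ d * (monomialMatrix σ e)ᵀ = 1 := by
  ext i j
  rw [mul_transpose_monomialMatrix_apply]
  by_cases hij : i = j
  · subst hij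
    simp [monomialMatrix, h]
  · simp [monomialMatrix, hij]

end Monomial

section CycShift

variable {K : Type*} [Ring K] {n : ℕ}

def cycCoef (n : ℕ) (w : K) (i : Fin n) : K := if (i : ℕ) + 1 = n then w else 1

/-- Ones on the superdiagonal and `w` at `(n-1, 0)`. -/
def cycShift (n : ℕ) (w : K) : Matrix (Fin n) (Fin n) K :=
  monomialMatrix (finRotate n) (cycCoef n w)

theorem cycShift_apply (w : K) (i j : Fin n) :
    cycShift n w i j =
      if (j : ℕ) = i + 1 then 1 else if (i : ℕ) + 1 = n ∧ (j : ℕ) = 0 then w else 0 := by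
  have := j.isLt
  simp only [cycShift, monomialMatrix, cycCoef, of_apply, finRotate_eq_iff]
  split_ifs <;> first | rfl | omega

theorem cycShift_mul_transpose {w w' : K} (hw : w * w' = 1) :
    cycShift n w * (cycShift n w')ᵀ = 1 :=
  monomialMatrix_mul_transpose fun i => by
    simp only [cycCoef]
    split_ifs
    exacts [hw, one_mul 1]

variable {c : ℕ} {S : Matrix (Fin n) (Fin n) K}
  (hS : ∀ i j, S i j ≠ 0 → c ≤ (i : ℕ) ∧ 1 ≤ (j : ℕ) ∧ (j : ℕ) ≤ c)
include hS

theorem mul_transpose_cycShift_mul_eq_zero (w : K) : S * (cycShift n w)ᵀ * S = 0 := by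
  ext i j
  rw [mul_apply, Matrix.zero_apply]
  refine sum_eq_zero fun l _ => ?_
  rw [cycShift, mul_transpose_monomialMatrix_apply]
  by_contra h
  have hl := hS i (finRotate n l) (left_ne_zero_of_mul (left_ne_zero_of_mul h))
  have hl' := hS l j (right_ne_zero_of_mul h)
  have := (finRotate_eq_iff l (finRotate n l)).1 rfl
  omega

theorem transpose_cycShift_sub_apply (w : K) {q C R : Fin n} (hqC : (q : ℕ) + 1 = C)
    (hCc : (C : ℕ) ≤ c) (hcR : c ≤ (R : ℕ)) :
    ((cycShift n w)ᵀ - (cycShift n w)ᵀ * S * (cycShift n w)ᵀ) C q = 1 ∧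
    ((cycShift n w)ᵀ - (cycShift n w)ᵀ * S * (cycShift n w)ᵀ) (finRotate n R) q =
      -(cycCoef n w R * S R C) := by
  have hσq : finRotate n q = C := (finRotate_eq_iff q C).2 (Or.inl hqC.symm)
  have hcoef : cycCoef n w q = 1 := if_neg (by omega)
  have entry : ∀ i, ((cycShift n w)ᵀ - (cycShift n w)ᵀ * S * (cycShift n w)ᵀ) i q =
      (if C = i then 1 else 0) -
        cycCoef n w ((finRotate n).symm i) * S ((finRotate n).symm i) C := by
    intro i
    rw [Matrix.sub_apply, cycShift, mul_transpose_monomialMatrix_apply,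
      transpose_monomialMatrix_mul_apply, transpose_apply, monomialMatrix, of_apply, hσq, hcoef,
      mul_one]
  constructor
  · have hS0 : S q C = 0 := by
      by_contra h
      have := hS q C h
      omega
    rw [entry, if_pos rfl, ← hσq, Equiv.symm_apply_apply, hσq, hS0, mul_zero, sub_zero]
  · have hne : C ≠ finRotate n R := fun h => by
      have := (finRotate_eq_iff R C).1 h.symm
      omega
    rw [entry, if_neg hne, Equiv.symm_apply_apply, zero_sub]

end CycShift

section Norms

variable {n : ℕ}

theorem norm_le_infNorm (A : Matrix (Fin n) (Fin n) ℂ) (i j : Fin n) : ‖A i j‖ ≤ infNorm A :=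
  (single_le_sum (fun j _ => norm_nonneg (A i j)) (mem_univ j)).trans
    (le_ciSup (f := fun i => ∑ j, ‖A i j‖) (Set.finite_range _).bddAbove i)

theorem norm_add_norm_le_oneNorm (A : Matrix (Fin n) (Fin n) ℂ) {i i' : Fin n} (h : i ≠ i')
    (j : Fin n) : ‖A i j‖ + ‖A i' j‖ ≤ oneNorm A := by
  rw [← sum_pair (f := fun i => ‖A i j‖) h]
  exact (sum_le_sum_of_subset_of_nonneg (subset_univ _) fun i _ _ => norm_nonneg (A i j)).trans
    (le_ciSup (f := fun j => ∑ i, ‖A i j‖) (Set.finite_range _).bddAbove j)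

theorem oneNorm_frob_le (a : ℕ → ℂ) {t : ℝ} (h0 : ‖a 0‖ ≤ t)
    (h : ∀ j, 1 ≤ j → j ≤ n - 1 → 1 + ‖a j‖ ≤ t) : oneNorm (Frob n a) ≤ t := by
  refine Real.iSup_le (fun j => ?_) ((norm_nonneg _).trans h0)
  set last : Fin n := ⟨n - 1, by have := j.isLt; omega⟩
  have hF : ∀ i, ‖Frob n a i j‖ ≤
      (if (j : ℕ) = i + 1 then 1 else 0) + (if i = last then ‖a j‖ else 0) := by
    intro i
    simp only [Frob, of_apply, last, Fin.ext_iff]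
    split_ifs <;> simp
  rcases Nat.eq_zero_or_pos j with hj | hj
  · calc ∑ i, ‖Frob n a i j‖ ≤ ∑ i, if i = last then ‖a j‖ else 0 :=
          sum_le_sum fun i _ => by simpa [hj] using hF i
      _ ≤ t := by simpa [hj] using h0
  · set prev : Fin n := ⟨j - 1, by omega⟩
    have hprev : ∀ i : Fin n, (j : ℕ) = i + 1 ↔ i = prev := fun i => by
      simp only [prev, Fin.ext_iff]
      omega
    simp only [hprev] at hF
    calc ∑ i, ‖Frob n a i j‖
        ≤ ∑ i, ((if i = prev then 1 else 0) + (if i = last then ‖a j‖ else 0)) :=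
          sum_le_sum fun i _ => hF i
      _ = 1 + ‖a j‖ := by simp [sum_add_distrib]
      _ ≤ t := h j hj (by omega)

end Norms

section TypeE

variable {n c : ℕ} {b : ℕ → ℂ} {E : Matrix (Fin n) (Fin n) ℂ}

theorem IsTypeE.sub_cycShift_support (hE : IsTypeE n c b E) (i j : Fin n)
    (h : (E - cycShift n (-b 0)) i j ≠ 0) : c ≤ (i : ℕ) ∧ 1 ≤ (j : ℕ) ∧ (j : ℕ) ≤ c := by
  obtain ⟨r, col, -, hr, hcol, -, hsup, hcorner, hzero⟩ := hE
  rw [Matrix.sub_apply, cycShift_apply] at h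
  split_ifs at h with hij hij'
  · exact absurd (by rw [hsup i j hij, sub_self]) h
  · exact absurd (by rw [hcorner i j (by omega) hij'.2, sub_self]) h
  · by_contra hout
    refine h ?_
    rw [hzero i j hij (by omega), sub_zero]
    rintro k hk ⟨rfl, rfl⟩
    exact hout ⟨hr k hk, hcol k hk⟩

theorem IsTypeE.inv_eq (hE : IsTypeE n c b E) (hb : b 0 ≠ 0) :
    E⁻¹ = (cycShift n (-b 0)⁻¹)ᵀ -
      (cycShift n (-b 0)⁻¹)ᵀ * (E - cycShift n (-b 0)) * (cycShift n (-b 0)⁻¹)ᵀ := by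
  refine inv_eq_right_inv ?_
  have := add_mul_sub_eq_one (cycShift_mul_transpose (mul_inv_cancel₀ (neg_ne_zero.2 hb)))
    (mul_transpose_cycShift_mul_eq_zero hE.sub_cycShift_support _)
  rwa [add_sub_cancel] at this

theorem IsTypeE.exists_inv_column (hE : IsTypeE n c b E) (hb : b 0 ≠ 0) {k : ℕ}
    (hk : k ≤ n - 2) : ∃ q i i' : Fin n, i ≠ i' ∧ E⁻¹ i q = 1 ∧
      (E⁻¹ i' q = b (n - 1 - k) ∨ E⁻¹ i' q = -b (n - 1 - k) / b 0) := by
  obtain ⟨r, col, hrc, hr, hcol, hval, -, -, -⟩ := id hE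
  have hrk := hrc k hk
  have hck := hcol k hk
  obtain ⟨hC, hR⟩ := transpose_cycShift_sub_apply hE.sub_cycShift_support (-b 0)⁻¹
    (q := ⟨col k - 1, by omega⟩) (by simp only; omega) hck.2 (hr k hk)
  rw [← hE.inv_eq hb] at hC hR
  have hS : (E - cycShift n (-b 0)) (r k) (col k) = -b (n - 1 - k) := by
    rw [Matrix.sub_apply, hval k hk, cycShift_apply, if_neg (by omega), if_neg (by omega), sub_zero]
  refine ⟨_, col k, finRotate n (r k), fun h => ?_, hC, ?_⟩
  · have := (finRotate_eq_iff (r k) (col k)).1 h.symm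
    omega
  · rw [hR, hS, cycCoef]
    split_ifs
    · right
      field_simp
    · left
      ring

theorem IsTypeE.norm_bounds_inv_asharp {a : ℕ → ℂ} (hE : IsTypeE n c (asharp n a) E)
    (ha0 : a 0 ≠ 0) (ha1 : ‖a 0‖ ≤ 1) (j : ℕ) (hj1 : 1 ≤ j) (hjn : j ≤ n - 1) :
    1 ≤ infNorm E⁻¹ ∧ ‖a j‖ ≤ infNorm E⁻¹ ∧ 1 + ‖a j‖ ≤ oneNorm E⁻¹ := by
  obtain ⟨q, i, i', hii', hone, hval⟩ :=
    hE.exists_inv_column (by simpa [asharp] using ha0) (k := j - 1) (by omega)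
  have hcoef : asharp n a (n - 1 - (j - 1)) = a j / a 0 := by
    rw [asharp, if_neg (by omega), show n - (n - 1 - (j - 1)) = j by omega]
  have hj : ‖a j‖ ≤ ‖E⁻¹ i' q‖ := by
    rcases hval with h | h <;> rw [h, hcoef]
    · rw [norm_div]
      exact le_div_self (norm_nonneg _) (norm_pos_iff.2 ha0) ha1
    · simp [asharp, ha0]
  refine ⟨?_, hj.trans (norm_le_infNorm _ i' q), ?_⟩
  · simpa [hone] using norm_le_infNorm E⁻¹ i q
  · calc 1 + ‖a j‖ ≤ ‖E⁻¹ i q‖ + ‖E⁻¹ i' q‖ := by rw [hone, norm_one]; gcongr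
      _ ≤ oneNorm E⁻¹ := norm_add_norm_le_oneNorm E⁻¹ hii' q

end TypeE

theorem stmt14_general (n c : ℕ) (hn : 3 ≤ n)
    (a : ℕ → ℂ) (h0 : 0 < ‖a 0‖) (h1 : ‖a 0‖ < 1)
    (A : Matrix (Fin n) (Fin n) ℂ) (hA : IsTypeEInv n c a A) :
    NN (Frob n a) - infNorm A ≤ 1 ∧
    NN (Frob n a) ≤ 2 * infNorm A ∧
    NN (Frob n a) ≤ oneNorm A := by
  obtain ⟨E, hE, rfl⟩ := hA
  have bounds := hE.norm_bounds_inv_asharp (norm_pos_iff.mp h0) h1.le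
  obtain ⟨hinf, -, hone⟩ := bounds 1 le_rfl (by omega)
  have hNF : ∀ t, 1 ≤ t → (∀ j, 1 ≤ j → j ≤ n - 1 → 1 + ‖a j‖ ≤ t) → NN (Frob n a) ≤ t :=
    fun t ht h => (min_le_right _ _).trans (oneNorm_frob_le a (h1.le.trans ht) h)
  refine ⟨?_, ?_, ?_⟩
  · linarith [hNF (1 + infNorm E⁻¹) (by linarith) fun j hj1 hjn => by
      linarith [(bounds j hj1 hjn).2.1]]
  · exact hNF _ (by linarith) fun j hj1 hjn => by linarith [(bounds j hj1 hjn).2.1]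
  · exact hNF _ (by linarith [norm_nonneg (a 1)]) fun j hj1 hjn => (bounds j hj1 hjn).2.2

/-- if `n ≥ 3`, `1 ≤ c ≤ n-2`, `0 < |a_0| < 1` and `A` is of type
`E_c(p♯)⁻¹`, then (i) `N(F) - ‖A‖_∞ ≤ 1`, (ii) `N(F) ≤ 2‖A‖_∞`, and
(iii) `N(F) ≤ ‖A‖_1`. -/
theorem stmt14 (n c : ℕ) (hn : 3 ≤ n) (hc1 : 1 ≤ c) (hc2 : c ≤ n - 2)
    (a : ℕ → ℂ) (h0 : 0 < ‖a 0‖) (h1 : ‖a 0‖ < 1)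
    (A : Matrix (Fin n) (Fin n) ℂ) (hA : IsTypeEInv n c a A) :
    NN (Frob n a) - infNorm A ≤ 1 ∧
    NN (Frob n a) ≤ 2 * infNorm A ∧
    NN (Frob n a) ≤ oneNorm A :=
  stmt14_general n c hn a h0 h1 A hA

end
end
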